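/- arXiv:1406.6599 — 4 statements merged into one kernel-verified Lean document; each statement's English description precedes it below -/
import Mathlib

section
/- Let P = {p_1, …, p_n} ⊆ ℝ^2 be points in general position, with each p_i independently present with probability π_i ∈ (0,1], forming a random subset B. For a point q ∉ P, the probability that q ∉ conv(B) equals Pr[B = ∅] plus the sum over i of π_i · ∏_{p_j ∈ G_i} (1 − π_j), where G_i is the set of sites strictly to the right of the oriented line from q through p_i. -/
attribute [local instance] Classical.propDecidable

noncomputable section

abbrev E2 := EuclideanSpace ℝ (Fin 2)

/-- The 2D cross product. -/
def cross2 (a b : E2) : ℝ := a 0 * b 1 - a 1 * b 0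

/-- The probability of the outcome `B ⊆ P` in the unipoint model. -/
def outcomeProb (P : Finset E2) (π : E2 → ℝ) (B : Finset E2) : ℝ :=
  (∏ p ∈ B, π p) * ∏ p ∈ P \ B, (1 - π p)

/-!
If `B ≠ ∅` and `q ∉ conv B`, a line separates `q` from `B`, so all directions `r - q`, `r ∈ B`,
lie in one open half-plane; the extreme one among them, strictly extreme by general position,
gives a site `p ∈ B` such that every other site of `B` lies strictly to the left of the oriented
line from `q` through `p` (the witness edge `q p`). Such a witness is unique, and conversely it
keeps `q` outside `conv B`. Hence `[q ∉ conv B] = [B = ∅] + ∑ₚ [p is the witness of B]`.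
The outcomes with witness `p` are exactly `B = insert p S` with `S` any set of sites to the left
of `q p`; summing their probabilities over `S` leaves `πₚ · ∏_{r ∈ Gₚ} (1 - π r)`.
-/

theorem cross2_anticomm (a b : E2) : cross2 b a = -cross2 a b := by
  unfold cross2; ring

@[simp]
theorem cross2_self (a : E2) : cross2 a a = 0 := by
  unfold cross2; ring

theorem cross2_sum_smul {ι : Type*} (a : E2) (s : Finset ι) (w : ι → ℝ) (v : ι → E2) :
    cross2 a (∑ i ∈ s, w i • v i) = ∑ i ∈ s, w i * cross2 a (v i) := by
  simp only [cross2, WithLp.ofLp_sum, Finset.sum_apply, PiLp.smul_apply, smul_eq_mul,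
    Finset.mul_sum, ← Finset.sum_sub_distrib]
  exact Finset.sum_congr rfl fun i _ => by ring

theorem inner_self_mul_cross2 (a b c : E2) :
    inner ℝ c c * cross2 a b = inner ℝ c a * cross2 c b - inner ℝ c b * cross2 c a := by
  simp only [cross2, PiLp.inner_apply, Fin.sum_univ_two, RCLike.inner_apply, conj_trivial]
  ring

theorem smul_eq_of_cross2_eq_zero {a b : E2} (ha : a ≠ 0) (h : cross2 a b = 0) :
    (inner ℝ a b / inner ℝ a a) • a = b := by
  have haa : inner ℝ a a ≠ 0 := inner_self_ne_zero.mpr ha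
  simp only [cross2, PiLp.inner_apply, Fin.sum_univ_two, RCLike.inner_apply, conj_trivial]
    at h haa ⊢
  refine PiLp.ext (Fin.forall_fin_two.mpr ⟨?_, ?_⟩) <;>
    rw [PiLp.smul_apply, smul_eq_mul, div_mul_eq_mul_div, div_eq_iff haa]
  · linear_combination a 1 * h
  · linear_combination -a 0 * h

theorem collinear_of_cross2_sub_eq_zero {q p r : E2} (hpq : p ≠ q)
    (h : cross2 (p - q) (r - q) = 0) : Collinear ℝ ({q, p, r} : Set E2) := by
  rw [collinear_iff_of_mem (Set.mem_insert q _)]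
  refine ⟨p - q, ?_⟩
  rintro x (rfl | rfl | rfl)
  · exact ⟨0, by simp⟩
  · exact ⟨1, by simp⟩
  · exact ⟨_, by
      rw [smul_eq_of_cross2_eq_zero (sub_ne_zero.mpr hpq) h, vadd_eq_add, sub_add_cancel]⟩

theorem exists_inner_pos_of_notMem_convexHull {E : Type*} [NormedAddCommGroup E]
    [InnerProductSpace ℝ E] [CompleteSpace E] {s : Set E} (hs : s.Finite) {q : E}
    (hq : q ∉ convexHull ℝ s) : ∃ c : E, ∀ r ∈ s, 0 < inner ℝ c (r - q) := by
  obtain ⟨f, u, hfq, hfs⟩ := geometric_hahn_banach_point_closed (convex_convexHull ℝ s)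
    (hs.isCompact_convexHull (𝕜 := ℝ)).isClosed hq
  refine ⟨(InnerProductSpace.toDual ℝ E).symm f, fun r hr => ?_⟩
  rw [InnerProductSpace.toDual_symm_apply, map_sub]
  linarith [hfs r (subset_convexHull ℝ s hr)]

def IsWitness (q p : E2) (B : Finset E2) : Prop :=
  p ∈ B ∧ ∀ r ∈ B, r ≠ p → 0 < cross2 (p - q) (r - q)

theorem IsWitness.eq {q p p' : E2} {B : Finset E2} (h : IsWitness q p B)
    (h' : IsWitness q p' B) : p = p' := by
  by_contra hne
  have hpp' := h.2 p' h'.1 (Ne.symm hne)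
  have hp'p := h'.2 p h.1 hne
  rw [cross2_anticomm] at hp'p
  linarith

theorem IsWitness.notMem_convexHull {q p : E2} {B : Finset E2} (h : IsWitness q p B)
    (hqp : q ≠ p) : q ∉ convexHull ℝ (B : Set E2) := by
  rw [Finset.convexHull_eq]
  rintro ⟨w, hw0, hw1, hwq⟩
  have hbal : ∑ r ∈ B, w r • (r - q) = 0 := by
    rw [Finset.centerMass_eq_of_sum_1 _ _ hw1] at hwq
    simpa [smul_sub, Finset.sum_sub_distrib, ← Finset.sum_smul, hw1, sub_eq_zero] using hwq
  have hterm : ∀ r ∈ B, 0 ≤ w r * cross2 (p - q) (r - q) := fun r hr => by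
    rcases eq_or_ne r p with rfl | hrp
    · simp
    · exact mul_nonneg (hw0 r hr) (h.2 r hr hrp).le
  have hzero := (Finset.sum_eq_zero_iff_of_nonneg hterm).mp
    (by rw [← cross2_sum_smul, hbal]; simp [cross2])
  have hw : ∀ r ∈ B, r ≠ p → w r = 0 := fun r hr hrp =>
    (mul_eq_zero.mp (hzero r hr)).resolve_right (h.2 r hr hrp).ne'
  have hwp : w p = 1 := by rwa [Finset.sum_eq_single_of_mem p h.1 hw] at hw1
  rw [Finset.sum_eq_single_of_mem p h.1 fun r hr hrp => by rw [hw r hr hrp, zero_smul], hwp,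
    one_smul, sub_eq_zero] at hbal
  exact hqp hbal.symm

theorem exists_isWitness {q : E2} {B : Finset E2} (hB : B.Nonempty)
    (hq : q ∉ convexHull ℝ (B : Set E2))
    (hgp : (B : Set E2).Pairwise fun p r => cross2 (p - q) (r - q) ≠ 0) :
    ∃ p, IsWitness q p B := by
  obtain ⟨c, hc⟩ := exists_inner_pos_of_notMem_convexHull B.finite_toSet hq
  -- all directions `r - q` lie in the open half-plane `⟪c, ·⟫ > 0`; take the extreme one
  obtain ⟨p, hp, hmin⟩ :=
    B.exists_min_image (fun r => cross2 c (r - q) / inner ℝ c (r - q)) hB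
  refine ⟨p, hp, fun r hr hrp => ?_⟩
  have hc0 : c ≠ 0 := by
    rintro rfl
    simpa using hc p hp
  have hle : 0 ≤ inner ℝ c c * cross2 (p - q) (r - q) := by
    have hpr := hmin r hr
    rw [div_le_div_iff₀ (hc p hp) (hc r hr)] at hpr
    rw [inner_self_mul_cross2]
    linarith
  exact (nonneg_of_mul_nonneg_right hle (real_inner_self_pos.mpr hc0)).lt_of_ne
    (hgp hp hr (Ne.symm hrp)).symm

theorem ite_notMem_convexHull_eq {q : E2} {P B : Finset E2} (hqP : q ∉ P)
    (hgp : (P : Set E2).Pairwise fun p r => cross2 (p - q) (r - q) ≠ 0) (hB : B ⊆ P) (x : ℝ) :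
    (if q ∉ convexHull ℝ (B : Set E2) then x else 0) =
      (if B = ∅ then x else 0) + ∑ p ∈ P, if IsWitness q p B then x else 0 := by
  rcases B.eq_empty_or_nonempty with rfl | hne
  · simp [IsWitness]
  rw [if_neg hne.ne_empty, zero_add]
  by_cases hq : q ∈ convexHull ℝ (B : Set E2)
  · rw [if_neg (not_not.mpr hq)]
    refine (Finset.sum_eq_zero fun p _ => if_neg fun hw => ?_).symm
    exact hw.notMem_convexHull (fun e => hqP (e ▸ hB hw.1)) hq
  · obtain ⟨p, hp⟩ := exists_isWitness hne hq (hgp.mono (by exact_mod_cast hB))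
    rw [if_pos hq, Finset.sum_eq_single_of_mem p (hB hp.1) fun r _ hrp =>
      if_neg fun hr => hrp (hr.eq hp), if_pos hp]

theorem sum_powerset_prod_mul_prod_one_sub {ι R : Type*} [DecidableEq ι] [CommRing R]
    (s : Finset ι) (f : ι → R) :
    ∑ t ∈ s.powerset, (∏ i ∈ t, f i) * ∏ i ∈ s \ t, (1 - f i) = 1 := by
  rw [← Finset.prod_add]
  simp

theorem sum_outcomeProb_insert (π : E2 → ℝ) {P L : Finset E2} {p : E2} (hLP : insert p L ⊆ P)
    (hpL : p ∉ L) :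
    ∑ S ∈ L.powerset, outcomeProb P π (insert p S) =
      π p * ∏ r ∈ P \ insert p L, (1 - π r) := by
  calc ∑ S ∈ L.powerset, outcomeProb P π (insert p S)
      = ∑ S ∈ L.powerset, π p * (∏ r ∈ P \ insert p L, (1 - π r)) *
          ((∏ r ∈ S, π r) * ∏ r ∈ L \ S, (1 - π r)) := by
        refine Finset.sum_congr rfl fun S hS => ?_
        rw [Finset.mem_powerset] at hS
        have hsplit : P \ insert p S = (P \ insert p L) ∪ (L \ S) := by
          ext r
          have hrS := @hS r
          have hrP := @hLP r
          have hrp : r = p → r ∉ L := fun h => h ▸ hpL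
          simp only [Finset.mem_sdiff, Finset.mem_insert, Finset.mem_union] at hrS hrP hrp ⊢
          tauto
        have hdisj : Disjoint (P \ insert p L) (L \ S) :=
          Finset.sdiff_disjoint.mono_right
            (Finset.sdiff_subset.trans (Finset.subset_insert p L))
        rw [outcomeProb, Finset.prod_insert fun h => hpL (hS h), hsplit,
          Finset.prod_union hdisj]
        ring
    _ = π p * ∏ r ∈ P \ insert p L, (1 - π r) := by
        rw [← Finset.mul_sum, sum_powerset_prod_mul_prod_one_sub L π, mul_one]

theorem filter_isWitness_powerset {q p : E2} {P : Finset E2} (hp : p ∈ P) :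
    P.powerset.filter (IsWitness q p) =
      (P.filter fun r => 0 < cross2 (p - q) (r - q)).powerset.image (insert p) := by
  ext B
  simp only [Finset.mem_filter, Finset.mem_powerset, Finset.mem_image, IsWitness]
  constructor
  · rintro ⟨hBP, hpB, hleft⟩
    refine ⟨B.erase p, fun r hr => ?_, Finset.insert_erase hpB⟩
    obtain ⟨hrp, hrB⟩ := Finset.mem_erase.mp hr
    exact Finset.mem_filter.mpr ⟨hBP hrB, hleft r hrB hrp⟩
  · rintro ⟨S, hS, rfl⟩
    refine ⟨Finset.insert_subset hp (hS.trans (Finset.filter_subset _ _)),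
      Finset.mem_insert_self p S, fun r hr hrp => ?_⟩
    exact (Finset.mem_filter.mp (hS ((Finset.mem_insert.mp hr).resolve_left hrp))).2

theorem sum_outcomeProb_isWitness (π : E2 → ℝ) {q p : E2} {P : Finset E2} (hp : p ∈ P)
    (hgp : ∀ r ∈ P, r ≠ p → cross2 (p - q) (r - q) ≠ 0) :
    ∑ B ∈ P.powerset with IsWitness q p B, outcomeProb P π B =
      π p * ∏ r ∈ P with cross2 (p - q) (r - q) < 0, (1 - π r) := by
  set L := P.filter fun r => 0 < cross2 (p - q) (r - q)
  have hpL : p ∉ L := by simp [L]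
  have hright : P \ insert p L = P.filter fun r => cross2 (p - q) (r - q) < 0 := by
    ext r
    simp only [Finset.mem_sdiff, Finset.mem_insert, Finset.mem_filter, L, not_or, not_and, not_lt]
    constructor
    · rintro ⟨hr, hrp, hle⟩
      exact ⟨hr, lt_of_le_of_ne (hle hr) (hgp r hr hrp)⟩
    · rintro ⟨hr, hneg⟩
      exact ⟨hr, by rintro rfl; simp at hneg, fun _ => hneg.le⟩
  have hinj : Set.InjOn (insert p) (L.powerset : Set (Finset E2)) := fun S hS T hT hST => by
    rw [Finset.mem_coe, Finset.mem_powerset] at hS hT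
    rw [← Finset.erase_insert fun h => hpL (hS h), hST, Finset.erase_insert fun h => hpL (hT h)]
  rw [filter_isWitness_powerset hp, Finset.sum_image hinj,
    sum_outcomeProb_insert π (Finset.insert_subset hp (Finset.filter_subset _ _)) hpL, hright]

theorem prob_not_in_hull_eq_general (P : Finset E2) (π : E2 → ℝ)
    (q : E2) (hqP : q ∉ P)
    (hgp : ∀ x y z : E2, x ∈ insert q (↑P : Set E2) → y ∈ insert q (↑P : Set E2) →
      z ∈ insert q (↑P : Set E2) → x ≠ y → x ≠ z → y ≠ z →
      ¬ Collinear ℝ ({x, y, z} : Set E2)) :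
    (∑ B ∈ P.powerset,
        if q ∉ convexHull ℝ (B : Set E2) then outcomeProb P π B else 0) =
      outcomeProb P π ∅ +
        ∑ p ∈ P, π p *
          ∏ r ∈ P.filter (fun r => cross2 (p - q) (r - q) < 0), (1 - π r) := by
  have hcross : (P : Set E2).Pairwise fun p r => cross2 (p - q) (r - q) ≠ 0 :=
    fun p hp r hr hpr h => hgp q p r (Set.mem_insert _ _) (Set.mem_insert_of_mem _ hp)
      (Set.mem_insert_of_mem _ hr) (fun e => hqP (e ▸ hp)) (fun e => hqP (e ▸ hr)) hpr
      (collinear_of_cross2_sub_eq_zero (fun e => hqP (e ▸ hp)) h)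
  calc (∑ B ∈ P.powerset, if q ∉ convexHull ℝ (B : Set E2) then outcomeProb P π B else 0)
      = ∑ B ∈ P.powerset, ((if B = ∅ then outcomeProb P π B else 0) +
          ∑ p ∈ P, if IsWitness q p B then outcomeProb P π B else 0) :=
        Finset.sum_congr rfl fun B hB =>
          ite_notMem_convexHull_eq hqP hcross (Finset.mem_powerset.mp hB) _
    _ = outcomeProb P π ∅ +
          ∑ p ∈ P, ∑ B ∈ P.powerset with IsWitness q p B, outcomeProb P π B := by
        rw [Finset.sum_add_distrib, Finset.sum_ite_eq' P.powerset ∅,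
          if_pos (Finset.empty_mem_powerset P), Finset.sum_comm]
        simp only [Finset.sum_filter]
    _ = _ := by
        congr 1
        exact Finset.sum_congr rfl fun p hp =>
          sum_outcomeProb_isWitness π hp fun r hr hrp => hcross hp hr hrp.symm

/-- Decomposition of the probability that `q ∉ conv(B)`: it equals the probability
that `B = ∅` plus, for each site `p i`, the probability that `q pᵢ` is the witness
edge, namely `πᵢ · ∏_{p_j ∈ G_i} (1 - π_j)` where `G_i` is the set of sites strictly
to the right of the oriented line from `q` through `pᵢ`. -/
theorem prob_not_in_hull_eq (P : Finset E2) (π : E2 → ℝ)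
    (hπ : ∀ p ∈ P, π p ∈ Set.Ioc (0 : ℝ) 1)
    (q : E2) (hqP : q ∉ P)
    (hgp : ∀ x y z : E2, x ∈ insert q (↑P : Set E2) → y ∈ insert q (↑P : Set E2) →
      z ∈ insert q (↑P : Set E2) → x ≠ y → x ≠ z → y ≠ z →
      ¬ Collinear ℝ ({x, y, z} : Set E2)) :
    (∑ B ∈ P.powerset,
        if q ∉ convexHull ℝ (B : Set E2) then outcomeProb P π B else 0) =
      outcomeProb P π ∅ +
        ∑ p ∈ P, π p *
          ∏ r ∈ P.filter (fun r => cross2 (p - q) (r - q) < 0), (1 - π r) :=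
  prob_not_in_hull_eq_general P π q hqP hgp
end
end

section
/- Let p_1, …, p_n be the vertices of a regular n-gon in ℝ^2, each present independently with probability γ ∈ (0,1). Let f_1, f_2 be two faces (relatively open cells) of the arrangement of all segments p_i p_j with f_1 ⊆ ∂f_2. Then the membership probability satisfies μ(f_1) > μ(f_2), where μ(f) = Pr[x ∈ conv(B)] for any x ∈ f. -/
/-!
Membership in each hull `conv S` is a closed condition, so a point on the boundary of a face
lies in every hull containing the face: its membership probability is at least as large.
If it were contained in exactly the same hulls, it would lie in the same constant-membership
region as the face, and adding it to the (connected) face would keep it connected, so it would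
belong to the face itself, forcing the two faces to coincide. Hence some hull contains the
boundary point but not the face, and since every subset of sites has positive probability,
the inequality is strict.
-/

attribute [local instance] Classical.propDecidable

noncomputable section

open Real

/-- Membership probability of `x` when each site of `P` is present independently
with probability `γ`. -/
def memProb (P : Finset E2) (γ : ℝ) (x : E2) : ℝ :=
  ∑ B ∈ P.powerset,
    if x ∈ convexHull ℝ (B : Set E2) then γ ^ B.card * (1 - γ) ^ (P.card - B.card) else 0

/-- A face of the arrangement: a maximal connected region on which membership in
`conv(S)` is constant for every `S ⊆ P`. -/
def IsFace (P : Finset E2) (F : Set E2) : Prop :=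
  ∃ x : E2, F = connectedComponentIn
    {y : E2 | ∀ S ∈ P.powerset,
      (x ∈ convexHull ℝ (S : Set E2) ↔ y ∈ convexHull ℝ (S : Set E2))} x

open Set

section MembershipFace

variable {X ι : Type*} {I : Set ι} {C : ι → Set X} {F G : Set X} {x y : X}

def membershipCell (I : Set ι) (C : ι → Set X) (x : X) : Set X :=
  {y | ∀ i ∈ I, (x ∈ C i ↔ y ∈ C i)}

theorem membershipCell_eq_of_mem (h : y ∈ membershipCell I C x) :
    membershipCell I C y = membershipCell I C x :=
  ext fun _ => forall₂_congr fun i hi => by rw [h i hi]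

variable [TopologicalSpace X]

def IsMembershipFace (I : Set ι) (C : ι → Set X) (F : Set X) : Prop :=
  ∃ x, F = connectedComponentIn (membershipCell I C x) x

namespace IsMembershipFace

theorem eq_connectedComponentIn (hF : IsMembershipFace I C F) (hx : x ∈ F) :
    F = connectedComponentIn (membershipCell I C x) x := by
  obtain ⟨w, rfl⟩ := hF
  rw [membershipCell_eq_of_mem (connectedComponentIn_subset _ _ hx)]
  exact connectedComponentIn_eq hx

theorem eq_of_mem (hF : IsMembershipFace I C F) (hG : IsMembershipFace I C G)
    (hxF : x ∈ F) (hxG : x ∈ G) : F = G :=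
  (hF.eq_connectedComponentIn hxF).trans (hG.eq_connectedComponentIn hxG).symm

theorem subset_membershipCell (hF : IsMembershipFace I C F) (hx : x ∈ F) :
    F ⊆ membershipCell I C x :=
  hF.eq_connectedComponentIn hx ▸ connectedComponentIn_subset _ _

theorem mem_of_mem_closure (hC : ∀ i ∈ I, IsClosed (C i)) (hF : IsMembershipFace I C F)
    (hx : x ∈ F) (hy : y ∈ closure F) {i : ι} (hi : i ∈ I) (hxi : x ∈ C i) : y ∈ C i :=
  closure_minimal (fun _ hz => (hF.subset_membershipCell hx hz i hi).mp hxi) (hC i hi) hy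

theorem mem_of_mem_closure_of_mem_membershipCell (hF : IsMembershipFace I C F) (hx : x ∈ F)
    (hy : y ∈ closure F) (hyx : y ∈ membershipCell I C x) : y ∈ F := by
  have hF_eq := hF.eq_connectedComponentIn hx
  have hpre : IsPreconnected (insert y F) :=
    (hF_eq ▸ isPreconnected_connectedComponentIn).subset_closure (subset_insert _ _)
      (insert_subset hy subset_closure)
  rw [hF_eq]
  exact hpre.subset_connectedComponentIn (mem_insert_of_mem _ hx)
    (insert_subset hyx (hF.subset_membershipCell hx)) (mem_insert _ _)

theorem exists_separating (hC : ∀ i ∈ I, IsClosed (C i)) (hF : IsMembershipFace I C F)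
    (hG : IsMembershipFace I C G) (hne : F ≠ G) (hy : y ∈ F) (hyG : y ∈ closure G)
    (hx : x ∈ G) : ∃ i ∈ I, y ∈ C i ∧ x ∉ C i := by
  by_contra! h
  have hyx : y ∈ membershipCell I C x := fun i hi =>
    ⟨hG.mem_of_mem_closure hC hx hyG hi, h i hi⟩
  exact hne (hF.eq_of_mem hG hy (hG.mem_of_mem_closure_of_mem_membershipCell hx hyG hyx))

end IsMembershipFace

end MembershipFace

theorem isFace_iff {P : Finset E2} {F : Set E2} :
    IsFace P F ↔
      IsMembershipFace (P.powerset : Set (Finset E2)) (fun S => convexHull ℝ (S : Set E2)) F :=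
  Iff.rfl

theorem memProb_lt_memProb {P : Finset E2} {γ : ℝ} {x y : E2} (hγ : γ ∈ Ioo (0 : ℝ) 1)
    (hmono : ∀ S ∈ P.powerset,
      x ∈ convexHull ℝ (S : Set E2) → y ∈ convexHull ℝ (S : Set E2))
    (hsep : ∃ S ∈ P.powerset,
      y ∈ convexHull ℝ (S : Set E2) ∧ x ∉ convexHull ℝ (S : Set E2)) :
    memProb P γ x < memProb P γ y := by
  have hw : ∀ B : Finset E2, 0 < γ ^ B.card * (1 - γ) ^ (P.card - B.card) := fun B =>
    mul_pos (pow_pos hγ.1 _) (pow_pos (sub_pos.mpr hγ.2) _)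
  refine Finset.sum_lt_sum (fun B hB => ?_) ?_
  · by_cases hx : x ∈ convexHull ℝ (B : Set E2)
    · rw [if_pos hx, if_pos (hmono B hB hx)]
    · rw [if_neg hx]
      split_ifs
      exacts [(hw B).le, le_rfl]
  · obtain ⟨S, hS, hyS, hxS⟩ := hsep
    exact ⟨S, hS, by simpa only [if_neg hxS, if_pos hyS] using hw S⟩

theorem ngon_membership_strict_mono_general
    (γ : ℝ) (hγ : γ ∈ Set.Ioo (0 : ℝ) 1)
    (P : Finset E2)
    (f₁ f₂ : Set E2) (hf₁ : IsFace P f₁) (hf₂ : IsFace P f₂)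
    (hbd : f₁ ⊆ frontier f₂) (hne : f₁ ≠ f₂)
    (x₁ : E2) (hx₁ : x₁ ∈ f₁) (x₂ : E2) (hx₂ : x₂ ∈ f₂) :
    memProb P γ x₂ < memProb P γ x₁ := by
  rw [isFace_iff] at hf₁ hf₂
  have hclosed : ∀ S ∈ (P.powerset : Set (Finset E2)), IsClosed (convexHull ℝ (S : Set E2)) :=
    fun S _ => (S.finite_toSet.isCompact_convexHull ℝ).isClosed
  have hx₁_cl : x₁ ∈ closure f₂ := frontier_subset_closure (hbd hx₁)
  exact memProb_lt_memProb hγ (fun S hS => hf₂.mem_of_mem_closure hclosed hx₂ hx₁_cl hS)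
    (hf₁.exists_separating hclosed hf₂ hne hx₁ hx₁_cl hx₂)

/-- For the vertices of a regular `n`-gon, each present independently with
probability `γ ∈ (0,1)`, the membership probability strictly decreases from a face
`f₁` of the arrangement to a face `f₂` whose boundary contains `f₁`. -/
theorem ngon_membership_strict_mono
    (n : ℕ) (hn : 3 ≤ n) (γ : ℝ) (hγ : γ ∈ Set.Ioo (0 : ℝ) 1)
    (p : Fin n → E2)
    (hp : ∀ k : Fin n, p k =
      (WithLp.toLp 2 (fun j : Fin 2 => if j = 0 then Real.cos (2 * π * k / n)
        else Real.sin (2 * π * k / n)) : E2))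
    (P : Finset E2) (hP : P = Finset.image p Finset.univ)
    (f₁ f₂ : Set E2) (hf₁ : IsFace P f₁) (hf₂ : IsFace P f₂)
    (hbd : f₁ ⊆ frontier f₂) (hne : f₁ ≠ f₂)
    (x₁ : E2) (hx₁ : x₁ ∈ f₁) (x₂ : E2) (hx₂ : x₂ ∈ f₂) :
    memProb P γ x₂ < memProb P γ x₁ :=
  ngon_membership_strict_mono_general γ hγ P f₁ f₂ hf₁ hf₂ hbd hne x₁ hx₁ x₂ hx₂
end
end

section
/- Let 𝒫 = {(P_1, Γ_1), …, (P_m, Γ_m)} be uncertain points in ℝ^2 in the multipoint model, and β ∈ [0,1]. Every minimal convex β-dense set C (i.e., a convex β-dense set containing no proper convex β-dense subset) equals the convex hull of C ∩ P, where P = ⋃ P_i; in particular C is a convex polygon with vertices in P. -/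
attribute [local instance] Classical.propDecidable

noncomputable section

/-- `C` is a convex `β`-dense set for the multipoint uncertain points
`(P₁,Γ₁),…,(P_m,Γ_m)`: it is convex and contains at least a `β`-fraction of the
probability mass of each uncertain point. -/
def IsBetaDense (m : ℕ) (Pm : Fin m → Finset E2) (γ : Fin m → E2 → ℝ) (β : ℝ)
    (C : Set E2) : Prop :=
  Convex ℝ C ∧ ∀ k : Fin m, β ≤ ∑ s ∈ (Pm k).filter (· ∈ C), γ k s

theorem IsBetaDense.of_subset_of_sites_mem {m : ℕ} {Pm : Fin m → Finset E2}
    {γ : Fin m → E2 → ℝ} {β : ℝ} {C D : Set E2} (hC : IsBetaDense m Pm γ β C)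
    (hD : Convex ℝ D) (hDC : D ⊆ C) (hsites : ∀ k, ∀ s ∈ Pm k, s ∈ C → s ∈ D) :
    IsBetaDense m Pm γ β D := by
  refine ⟨hD, fun k => ?_⟩
  have hsame : (Pm k).filter (· ∈ D) = (Pm k).filter (· ∈ C) :=
    Finset.filter_congr fun s hs => ⟨fun hsD => hDC hsD, hsites k s hs⟩
  exact hsame ▸ hC.2 k

theorem minimal_beta_dense_eq_hull_general
    (m : ℕ) (Pm : Fin m → Finset E2) (γ : Fin m → E2 → ℝ)
    (β : ℝ)
    (Pall : Finset E2) (hPall : (Pall : Set E2) = ⋃ k : Fin m, (Pm k : Set E2))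
    (C : Set E2) (hC : IsBetaDense m Pm γ β C)
    (hmin : ∀ C' : Set E2, C' ⊆ C → C' ≠ C → ¬ IsBetaDense m Pm γ β C') :
    C = convexHull ℝ (C ∩ (Pall : Set E2)) := by
  have hsub : convexHull ℝ (C ∩ Pall) ⊆ C := convexHull_min Set.inter_subset_left hC.1
  have hdense : IsBetaDense m Pm γ β (convexHull ℝ (C ∩ Pall)) :=
    hC.of_subset_of_sites_mem (convex_convexHull ℝ _) hsub fun k s hs hsC =>
      subset_convexHull ℝ _ ⟨hsC, hPall ▸ Set.mem_iUnion.2 ⟨k, hs⟩⟩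
  by_contra hne
  exact hmin _ hsub (Ne.symm hne) hdense

/-- A minimal convex `β`-dense set equals the convex hull of the sites it
contains; in particular it is a convex polygon with vertices among the sites. -/
theorem minimal_beta_dense_eq_hull
    (m : ℕ) (Pm : Fin m → Finset E2) (γ : Fin m → E2 → ℝ)
    (hγ : ∀ k, ∀ s ∈ Pm k, 0 < γ k s) (hsum : ∀ k, ∑ s ∈ Pm k, γ k s ≤ 1)
    (β : ℝ) (hβ : β ∈ Set.Icc (0 : ℝ) 1)
    (Pall : Finset E2) (hPall : (Pall : Set E2) = ⋃ k : Fin m, (Pm k : Set E2))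
    (C : Set E2) (hC : IsBetaDense m Pm γ β C)
    (hmin : ∀ C' : Set E2, C' ⊆ C → C' ≠ C → ¬ IsBetaDense m Pm γ β C') :
    C = convexHull ℝ (C ∩ (Pall : Set E2)) :=
  minimal_beta_dense_eq_hull_general m Pm γ β Pall hPall C hC hmin
end
end

section
/- Let 𝒫 be a set of m uncertain points in ℝ^2 in the multipoint model with a total of n sites P, and β ∈ [0,1]. The β-hull of 𝒫 (the intersection of all convex β-dense sets) is a convex polygon with at most 2n edges; more precisely, for each site p ∈ P, at most two lines supporting edges of the β-hull pass through p, and every edge-supporting line passes through two sites of P. -/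
open scoped RealInnerProductSpace
attribute [local instance] Classical.propDecidable

noncomputable section

/-- The `β`-hull: the intersection of all convex `β`-dense sets. -/
def betaHull (m : ℕ) (Pm : Fin m → Finset E2) (γ : Fin m → E2 → ℝ) (β : ℝ) : Set E2 :=
  ⋂₀ {C : Set E2 | IsBetaDense m Pm γ β C}

/-- `ℓ` is a line supporting an edge of the set `K`: a line bounding a closed
halfplane containing `K` and meeting `K` in at least two points. -/
def IsEdgeLine (K : Set E2) (ℓ : Set E2) : Prop :=
  (∃ v : E2, v ≠ 0 ∧ ∃ c : ℝ, ℓ = {x | ⟪v, x⟫ = c} ∧ K ⊆ {x | ⟪v, x⟫ ≤ c}) ∧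
  ∃ a ∈ ℓ ∩ K, ∃ b ∈ ℓ ∩ K, a ≠ b

/-!
A convex `β`-dense set `C` contains the convex hull of the sites it covers, and that hull is again
`β`-dense. Hence the `β`-hull is the intersection of finitely many polygons `conv T` with `T ⊆ P`.
If `ℓ` supports an edge `[a, b]` of it, the midpoint of `a` and `b` is not interior to one of these
polygons `conv T`, so some nonzero functional `f` attains its maximum over `conv T` there. The face
`{f = max}` of `conv T` contains `a` and `b` and is the hull of the sites of `T` it contains, so it
contains two sites; in the plane it lies on the line through `a` and `b`, which is `ℓ`.

Three distinct edge lines through `p`, with outer normals `v₁, v₂, v₃`, satisfy a relation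
`a₁ v₁ + a₂ v₂ + a₃ v₃ = 0` with all `aᵢ ≠ 0`. Two coefficients, say `a₁, a₂`, have the same sign;
pairing the relation with `p - x` for a point `x` of the set on the third line forces `x` onto
the first two lines, i.e. `x = p`, whereas an edge line carries two points of the set.
-/

lemma exists_pos_mul_of_ne_zero {a₁ a₂ a₃ : ℝ} (h₁ : a₁ ≠ 0) (h₂ : a₂ ≠ 0) (h₃ : a₃ ≠ 0) :
    0 < a₁ * a₂ ∨ 0 < a₁ * a₃ ∨ 0 < a₂ * a₃ := by
  rcases h₁.lt_or_gt with h₁ | h₁ <;> rcases h₂.lt_or_gt with h₂ | h₂ <;>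
    rcases h₃.lt_or_gt with h₃ | h₃ <;> simp [mul_pos_of_neg_of_neg, *]

section InnerProductSpace

variable {E : Type*} [NormedAddCommGroup E] [InnerProductSpace ℝ E]

lemma notMem_interior_of_inner_eq {K : Set E} {v x : E} {c : ℝ} (hv : v ≠ 0)
    (hK : K ⊆ {y | ⟪v, y⟫ ≤ c}) (hx : ⟪v, x⟫ = c) : x ∉ interior K := by
  intro hxK
  have hopen : IsOpenMap (innerSL ℝ v) :=
    (innerSL ℝ v).isOpenMap_of_ne_zero fun h => hv (by simpa using DFunLike.congr_fun h v)
  have hint := interior_mono hK hxK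
  rw [show {y | ⟪v, y⟫ ≤ c} = innerSL ℝ v ⁻¹' Set.Iic c from rfl,
    ← hopen.preimage_interior_eq_interior_preimage (innerSL ℝ v).continuous, interior_Iic] at hint
  exact (show ⟪v, x⟫ < c from hint).ne hx

lemma linearIndependent_pair_of_hyperplanes_ne {v w p : E} (hv : v ≠ 0) (hw : w ≠ 0)
    (hne : {x | ⟪v, x⟫ = ⟪v, p⟫} ≠ {x | ⟪w, x⟫ = ⟪w, p⟫}) :
    LinearIndependent ℝ ![v, w] := by
  refine (LinearIndependent.pair_iff' hv).2 fun t ht => hne ?_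
  subst ht
  have ht : t ≠ 0 := by rintro rfl; simp at hw
  ext x
  simp [real_inner_smul_left, ht]

lemma inner_eq_of_linear_relation {v₁ v₂ v₃ x p : E} {a₁ a₂ a₃ : ℝ}
    (hrel : a₁ • v₁ + a₂ • v₂ + a₃ • v₃ = 0) (ha : 0 < a₁ * a₂)
    (h₁ : ⟪v₁, x⟫ ≤ ⟪v₁, p⟫) (h₂ : ⟪v₂, x⟫ ≤ ⟪v₂, p⟫) (h₃ : ⟪v₃, x⟫ = ⟪v₃, p⟫) :
    ⟪v₁, x⟫ = ⟪v₁, p⟫ ∧ ⟪v₂, x⟫ = ⟪v₂, p⟫ := by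
  have h := congrArg (⟪·, p - x⟫) hrel
  simp only [inner_add_left, real_inner_smul_left, inner_sub_right, inner_zero_left, h₃] at h
  rcases pos_and_pos_or_neg_and_neg_of_mul_pos ha with ⟨ha₁, ha₂⟩ | ⟨ha₁, ha₂⟩ <;>
    constructor <;> nlinarith

lemma eq_of_inner_eq_of_linearIndependent (hE : Module.finrank ℝ E = 2) {v₁ v₂ x y : E}
    (h : LinearIndependent ℝ ![v₁, v₂]) (h₁ : ⟪v₁, x⟫ = ⟪v₁, y⟫) (h₂ : ⟪v₂, x⟫ = ⟪v₂, y⟫) :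
    x = y :=
  have := Module.finite_of_finrank_eq_succ hE
  InnerProductSpace.ext_inner_left_basis (basisOfLinearIndependentOfCardEqFinrank h (by simp [hE]))
    (Fin.forall_fin_two.2 ⟨by simpa using h₁, by simpa using h₂⟩)

lemma eq_of_inner_le_of_linear_relation (hE : Module.finrank ℝ E = 2) {v₁ v₂ v₃ x p : E}
    {a₁ a₂ a₃ : ℝ} (hind : LinearIndependent ℝ ![v₁, v₂])
    (hrel : a₁ • v₁ + a₂ • v₂ + a₃ • v₃ = 0) (ha : 0 < a₁ * a₂)
    (h₁ : ⟪v₁, x⟫ ≤ ⟪v₁, p⟫) (h₂ : ⟪v₂, x⟫ ≤ ⟪v₂, p⟫) (h₃ : ⟪v₃, x⟫ = ⟪v₃, p⟫) : x = p :=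
  have h := inner_eq_of_linear_relation hrel ha h₁ h₂ h₃
  eq_of_inner_eq_of_linearIndependent hE hind h.1 h.2

end InnerProductSpace

section Module

variable {V : Type*} [AddCommGroup V] [Module ℝ V]

lemma Finset.mem_convexHull_filter_of_le {T : Finset V} {f : V →ₗ[ℝ] ℝ} {r : ℝ}
    (hT : ∀ s ∈ T, f s ≤ r) {a : V} (ha : a ∈ convexHull ℝ (T : Set V)) (hfa : f a = r) :
    a ∈ convexHull ℝ (T.filter (f · = r) : Set V) := by
  subst hfa
  obtain ⟨w, hw0, hw1, hwa⟩ := Finset.mem_convexHull'.1 ha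
  have hface : ∀ s ∈ T, w s ≠ 0 → f s = f a := by
    have hsum : ∑ s ∈ T, w s * (f a - f s) = 0 := by
      have hfa : ∑ s ∈ T, w s * f s = f a := by simp [← hwa, map_sum]
      simp only [mul_sub, Finset.sum_sub_distrib, ← Finset.sum_mul, hw1, hfa, one_mul, sub_self]
    intro s hs hws
    have := (Finset.sum_eq_zero_iff_of_nonneg fun s hs =>
      mul_nonneg (hw0 s hs) (sub_nonneg.2 (hT s hs))).1 hsum s hs
    linarith [(mul_eq_zero.1 this).resolve_left hws]
  refine Finset.mem_convexHull'.2 ⟨w, fun s hs => hw0 s (Finset.mem_filter.1 hs).1, ?_, ?_⟩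
  · rwa [Finset.sum_filter_of_ne fun s hs hws => hface s hs hws]
  · rwa [Finset.sum_filter_of_ne fun s hs hws => hface s hs (left_ne_zero_of_smul hws)]

lemma Submodule.eq_span_singleton_of_ne_top (hV : Module.finrank ℝ V = 2) {W : Submodule ℝ V}
    (hW : W ≠ ⊤) {d : V} (hd : d ∈ W) (hd0 : d ≠ 0) : W = ℝ ∙ d := by
  have := Module.finite_of_finrank_eq_succ hV
  refine (Submodule.eq_of_le_of_finrank_le ((Submodule.span_singleton_le_iff_mem d W).2 hd) ?_).symm
  have := Submodule.finrank_lt hW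
  rw [finrank_span_singleton hd0]
  omega

lemma LinearMap.apply_eq_of_apply_eq_of_ne_zero (hV : Module.finrank ℝ V = 2)
    {f g : V →ₗ[ℝ] ℝ} (hf : f ≠ 0) {a b s : V} (hab : a ≠ b) (hfb : f b = f a) (hfs : f s = f a)
    (hgb : g b = g a) : g s = g a := by
  have hker : LinearMap.ker f ≠ ⊤ := LinearMap.ker_eq_top.not.2 hf
  have hba : b - a ∈ LinearMap.ker f := by simp [hfb]
  have hsa : s - a ∈ LinearMap.ker f := by simp [hfs]
  rw [Submodule.eq_span_singleton_of_ne_top hV hker hba (sub_ne_zero.2 hab.symm),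
    Submodule.mem_span_singleton] at hsa
  obtain ⟨t, ht⟩ := hsa
  have := congrArg g ht
  simp only [map_smul, map_sub, hgb, sub_self, smul_zero] at this
  linarith

lemma exists_linear_relation_of_linearIndependent_pairs (hV : Module.finrank ℝ V = 2)
    {v₁ v₂ v₃ : V} (h₁₂ : LinearIndependent ℝ ![v₁, v₂]) (h₁₃ : LinearIndependent ℝ ![v₁, v₃])
    (h₂₃ : LinearIndependent ℝ ![v₂, v₃]) :
    ∃ a₁ a₂ a₃ : ℝ, a₁ ≠ 0 ∧ a₂ ≠ 0 ∧ a₃ ≠ 0 ∧ a₁ • v₁ + a₂ • v₂ + a₃ • v₃ = 0 := by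
  have := Module.finite_of_finrank_eq_succ hV
  have hspan : v₃ ∈ Submodule.span ℝ {v₁, v₂} := by
    rw [← Matrix.range_cons_cons_empty, h₁₂.span_eq_top_of_card_eq_finrank (by simp [hV])]
    trivial
  obtain ⟨α, β, hαβ⟩ := Submodule.mem_span_pair.1 hspan
  refine ⟨α, β, -1, ?_, ?_, by norm_num, by rw [hαβ, neg_one_smul, add_neg_cancel]⟩
  · rintro rfl
    exact (LinearIndependent.pair_iff' (h₁₂.ne_zero 1)).1 h₂₃ β (by simpa using hαβ)
  · rintro rfl
    exact (LinearIndependent.pair_iff' (h₁₂.ne_zero 0)).1 h₁₃ α (by simpa using hαβ)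

end Module

lemma exists_linearMap_ne_zero_le_of_notMem_interior {V : Type*} [NormedAddCommGroup V]
    [NormedSpace ℝ V] [FiniteDimensional ℝ V] {A : Set V} {x : V} (hA : Convex ℝ A)
    (hxA : x ∈ A) (hx : x ∉ interior A) :
    ∃ f : V →ₗ[ℝ] ℝ, f ≠ 0 ∧ ∀ a ∈ A, f a ≤ f x := by
  rcases (interior A).eq_empty_or_nonempty with hint | hint
  · have hspan : affineSpan ℝ A ≠ ⊤ := fun h => by
      simpa [hint] using hA.interior_nonempty_iff_affineSpan_eq_top.2 h
    have hdir : (affineSpan ℝ A).direction < ⊤ := by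
      rwa [lt_top_iff_ne_top, Ne, AffineSubspace.direction_eq_top_iff_of_nonempty
        ⟨x, subset_affineSpan ℝ A hxA⟩]
    obtain ⟨f, hf, hker⟩ := Submodule.exists_le_ker_of_lt_top _ hdir
    refine ⟨f, hf, fun a ha => le_of_eq ?_⟩
    have := hker (AffineSubspace.vsub_mem_direction (subset_affineSpan ℝ A ha)
      (subset_affineSpan ℝ A hxA))
    simpa [sub_eq_zero] using this
  · obtain ⟨f, hf, hle⟩ := geometric_hahn_banach_of_nonempty_interior_point hA hx hint
    exact ⟨f, by simpa using ContinuousLinearMap.coe_injective.ne hf, hle⟩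

lemma Finset.exists_pair_apply_eq_of_midpoint_notMem_interior {V : Type*} [NormedAddCommGroup V]
    [NormedSpace ℝ V] (hV : Module.finrank ℝ V = 2) {T : Finset V} {a b : V}
    (ha : a ∈ convexHull ℝ (T : Set V)) (hb : b ∈ convexHull ℝ (T : Set V)) (hab : a ≠ b)
    (hmid : midpoint ℝ a b ∉ interior (convexHull ℝ (T : Set V))) {g : V →ₗ[ℝ] ℝ}
    (hg : g b = g a) : ∃ s₁ ∈ T, ∃ s₂ ∈ T, s₁ ≠ s₂ ∧ g s₁ = g a ∧ g s₂ = g a := by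
  have := Module.finite_of_finrank_eq_succ hV
  set x := midpoint ℝ a b
  obtain ⟨f, hf, hle⟩ := exists_linearMap_ne_zero_le_of_notMem_interior (x := x)
    (convex_convexHull ℝ _) ((convex_convexHull ℝ _).midpoint_mem ha hb) hmid
  have hfx : f x = 2⁻¹ * f a + 2⁻¹ * f b := by simp [x, midpoint_eq_smul_add]
  have hfa : f a = f x := by linarith [hle a ha, hle b hb]
  have hfb : f b = f x := by linarith [hle a ha, hle b hb]
  have hTx : ∀ s ∈ T, f s ≤ f x := fun s hs => hle s (subset_convexHull ℝ _ hs)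
  obtain ⟨s₁, hs₁, s₂, hs₂, hs⟩ : (T.filter (f · = f x) : Set V).Nontrivial := by
    by_contra hface
    rw [Set.not_nontrivial_iff, ← (hface.convex (𝕜 := ℝ)).convexHull_eq] at hface
    exact hab (hface (Finset.mem_convexHull_filter_of_le hTx ha hfa)
      (Finset.mem_convexHull_filter_of_le hTx hb hfb))
  have hline : ∀ s ∈ T.filter (f · = f x), g s = g a := fun s hs =>
    LinearMap.apply_eq_of_apply_eq_of_ne_zero hV hf hab (hfb.trans hfa.symm)
      ((Finset.mem_filter.1 hs).2.trans hfa.symm) hg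
  exact ⟨s₁, Finset.mem_of_mem_filter _ hs₁, s₂, Finset.mem_of_mem_filter _ hs₂, hs,
    hline s₁ hs₁, hline s₂ hs₂⟩

lemma IsEdgeLine.exists_normal_of_mem {K ℓ : Set E2} {p : E2} (h : IsEdgeLine K ℓ) (hp : p ∈ ℓ) :
    ∃ v : E2, v ≠ 0 ∧ ℓ = {x | ⟪v, x⟫ = ⟪v, p⟫} ∧ (∀ x ∈ K, ⟪v, x⟫ ≤ ⟪v, p⟫) ∧
      ∃ x ∈ K, x ∈ ℓ ∧ x ≠ p := by
  obtain ⟨⟨v, hv, c, rfl, hK⟩, a, ⟨haℓ, haK⟩, b, ⟨hbℓ, hbK⟩, hab⟩ := h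
  obtain rfl : ⟪v, p⟫ = c := hp
  refine ⟨v, hv, rfl, fun x hx => hK hx, ?_⟩
  by_cases hap : a = p
  · exact ⟨b, hbK, hbℓ, fun hbp => hab (hap.trans hbp.symm)⟩
  · exact ⟨a, haK, haℓ, hap⟩

theorem encard_setOf_isEdgeLine_mem_le_two (K : Set E2) (p : E2) :
    {ℓ | IsEdgeLine K ℓ ∧ p ∈ ℓ}.encard ≤ 2 := by
  by_contra! h
  obtain ⟨t, ht, ht3⟩ := Set.exists_subset_encard_eq (Order.add_one_le_of_lt h)
  obtain ⟨ℓ₁, ℓ₂, ℓ₃, h₁₂, h₁₃, h₂₃, rfl⟩ := Set.encard_eq_three.1 ht3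
  have hmem : ∀ ℓ ∈ ({ℓ₁, ℓ₂, ℓ₃} : Set (Set E2)), IsEdgeLine K ℓ ∧ p ∈ ℓ := ht
  obtain ⟨v₁, hv₁, rfl, hK₁, x₁, hx₁K, hx₁ℓ, hx₁p⟩ :=
    (hmem ℓ₁ (by simp)).1.exists_normal_of_mem (hmem ℓ₁ (by simp)).2
  obtain ⟨v₂, hv₂, rfl, hK₂, x₂, hx₂K, hx₂ℓ, hx₂p⟩ :=
    (hmem ℓ₂ (by simp)).1.exists_normal_of_mem (hmem ℓ₂ (by simp)).2
  obtain ⟨v₃, hv₃, rfl, hK₃, x₃, hx₃K, hx₃ℓ, hx₃p⟩ :=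
    (hmem ℓ₃ (by simp)).1.exists_normal_of_mem (hmem ℓ₃ (by simp)).2
  have hE : Module.finrank ℝ E2 = 2 := finrank_euclideanSpace_fin
  have i₁₂ := linearIndependent_pair_of_hyperplanes_ne hv₁ hv₂ h₁₂
  have i₁₃ := linearIndependent_pair_of_hyperplanes_ne hv₁ hv₃ h₁₃
  have i₂₃ := linearIndependent_pair_of_hyperplanes_ne hv₂ hv₃ h₂₃
  obtain ⟨a₁, a₂, a₃, ha₁, ha₂, ha₃, hrel⟩ :=
    exists_linear_relation_of_linearIndependent_pairs hE i₁₂ i₁₃ i₂₃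
  rcases exists_pos_mul_of_ne_zero ha₁ ha₂ ha₃ with ha | ha | ha
  · exact hx₃p (eq_of_inner_le_of_linear_relation hE i₁₂ hrel ha (hK₁ x₃ hx₃K) (hK₂ x₃ hx₃K) hx₃ℓ)
  · exact hx₂p (eq_of_inner_le_of_linear_relation hE i₁₃ (by rw [← hrel]; abel) ha
      (hK₁ x₂ hx₂K) (hK₃ x₂ hx₂K) hx₂ℓ)
  · exact hx₁p (eq_of_inner_le_of_linear_relation hE i₂₃ (by rw [← hrel]; abel) ha
      (hK₂ x₁ hx₁K) (hK₃ x₁ hx₁K) hx₁ℓ)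

theorem encard_setOf_isEdgeLine_le (K : Set E2) (P : Finset E2)
    (hP : ∀ ℓ, IsEdgeLine K ℓ → ∃ p ∈ P, p ∈ ℓ) :
    {ℓ | IsEdgeLine K ℓ}.encard ≤ 2 * P.card :=
  calc {ℓ | IsEdgeLine K ℓ}.encard
      ≤ (⋃ p ∈ P, {ℓ | IsEdgeLine K ℓ ∧ p ∈ ℓ}).encard := Set.encard_mono fun ℓ hℓ => by
        obtain ⟨p, hpP, hpℓ⟩ := hP ℓ hℓ
        exact Set.mem_biUnion hpP ⟨hℓ, hpℓ⟩
    _ ≤ ∑ p ∈ P, {ℓ | IsEdgeLine K ℓ ∧ p ∈ ℓ}.encard := P.set_encard_biUnion_le _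
    _ ≤ ∑ _p ∈ P, 2 := Finset.sum_le_sum fun p _ => encard_setOf_isEdgeLine_mem_le_two K p
    _ = 2 * P.card := by rw [Finset.sum_const, nsmul_eq_mul, mul_comm]

theorem IsEdgeLine.exists_pair_mem_of_biInter_convexHull {𝔽 : Finset (Finset E2)} {ℓ : Set E2}
    (h : IsEdgeLine (⋂ T ∈ 𝔽, convexHull ℝ (T : Set E2)) ℓ) :
    ∃ T ∈ 𝔽, ∃ a ∈ T, ∃ b ∈ T, a ≠ b ∧ a ∈ ℓ ∧ b ∈ ℓ := by
  obtain ⟨⟨v, hv, c, rfl, hK⟩, a, ⟨haℓ, haK⟩, b, ⟨hbℓ, hbK⟩, hab⟩ := h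
  change ⟪v, a⟫ = c at haℓ
  change ⟪v, b⟫ = c at hbℓ
  have hmidℓ : ⟪v, midpoint ℝ a b⟫ = c := by
    simp only [midpoint_eq_smul_add, invOf_eq_inv, inner_add_right, real_inner_smul_right, haℓ,
      hbℓ]
    ring
  obtain ⟨T, hT, hmidT⟩ : ∃ T ∈ 𝔽, midpoint ℝ a b ∉ interior (convexHull ℝ (T : Set E2)) := by
    by_contra! hint
    refine notMem_interior_of_inner_eq hv hK hmidℓ (interior_maximal ?_
      (isOpen_biInter_finset fun T _ => isOpen_interior) (Set.mem_iInter₂.2 hint))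
    exact Set.iInter₂_mono fun T _ => interior_subset
  have hKT : (⋂ T ∈ 𝔽, convexHull ℝ (T : Set E2)) ⊆ convexHull ℝ T :=
    Set.biInter_subset_of_mem hT
  obtain ⟨s₁, hs₁, s₂, hs₂, hs, hs₁ℓ, hs₂ℓ⟩ :=
    T.exists_pair_apply_eq_of_midpoint_notMem_interior finrank_euclideanSpace_fin (hKT haK)
      (hKT hbK) hab hmidT (g := innerₛₗ ℝ v) (by simpa using hbℓ.trans haℓ.symm)
  refine ⟨T, hT, s₁, hs₁, s₂, hs₂, hs, ?_, ?_⟩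
  · simpa [haℓ] using hs₁ℓ
  · simpa [haℓ] using hs₂ℓ

section BetaHull

variable {m : ℕ} {Pm : Fin m → Finset E2} {γ : Fin m → E2 → ℝ} {β : ℝ}

lemma convex_betaHull : Convex ℝ (betaHull m Pm γ β) :=
  convex_sInter fun _ hC => hC.1

lemma IsBetaDense.mono_sites (hγ : ∀ k, ∀ s ∈ Pm k, 0 ≤ γ k s) {C D : Set E2}
    (hC : IsBetaDense m Pm γ β C) (hD : Convex ℝ D) (hCD : ∀ k, ∀ s ∈ Pm k, s ∈ C → s ∈ D) :
    IsBetaDense m Pm γ β D := by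
  refine ⟨hD, fun k => (hC.2 k).trans (Finset.sum_le_sum_of_subset_of_nonneg ?_ ?_)⟩
  · intro s hs
    rw [Finset.mem_filter] at hs ⊢
    exact ⟨hs.1, hCD k s hs.1 hs.2⟩
  · exact fun s hs _ => hγ k s (Finset.mem_of_mem_filter s hs)

lemma betaHull_eq_biInter_convexHull (hγ : ∀ k, ∀ s ∈ Pm k, 0 ≤ γ k s) {P : Finset E2}
    (hP : ∀ k, Pm k ⊆ P) :
    betaHull m Pm γ β = ⋂ T ∈ P.powerset.filter
      (fun T : Finset E2 => IsBetaDense m Pm γ β (convexHull ℝ (T : Set E2))),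
      convexHull ℝ (T : Set E2) := by
  refine subset_antisymm (Set.subset_iInter₂ fun T hT =>
    Set.sInter_subset_of_mem (Finset.mem_filter.1 hT).2) (Set.subset_sInter fun C hC => ?_)
  have hdense : IsBetaDense m Pm γ β (convexHull ℝ (P.filter (· ∈ C) : Set E2)) :=
    hC.mono_sites hγ (convex_convexHull ℝ _) fun k s hs hsC =>
      subset_convexHull ℝ _ (Finset.mem_filter.2 ⟨hP k hs, hsC⟩)
  refine (Set.biInter_subset_of_mem (Finset.mem_filter.2
    ⟨Finset.mem_powerset.2 (Finset.filter_subset _ _), hdense⟩)).trans ?_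
  exact convexHull_min (fun s hs => (Finset.mem_filter.1 hs).2) hC.1

theorem IsEdgeLine.exists_pair_mem_of_betaHull (hγ : ∀ k, ∀ s ∈ Pm k, 0 ≤ γ k s)
    {P : Finset E2} (hP : ∀ k, Pm k ⊆ P) {ℓ : Set E2} (h : IsEdgeLine (betaHull m Pm γ β) ℓ) :
    ∃ a ∈ P, ∃ b ∈ P, a ≠ b ∧ a ∈ ℓ ∧ b ∈ ℓ := by
  rw [betaHull_eq_biInter_convexHull hγ hP] at h
  obtain ⟨T, hT, a, ha, b, hb, hab, haℓ, hbℓ⟩ := h.exists_pair_mem_of_biInter_convexHull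
  have hTP := Finset.mem_powerset.1 (Finset.mem_filter.1 hT).1
  exact ⟨a, hTP ha, b, hTP hb, hab, haℓ, hbℓ⟩

end BetaHull

theorem betaHull_complexity_general
    (m : ℕ) (Pm : Fin m → Finset E2) (γ : Fin m → E2 → ℝ)
    (hγ : ∀ k, ∀ s ∈ Pm k, 0 < γ k s)
    (β : ℝ)
    (Pall : Finset E2) (hPall : (Pall : Set E2) = ⋃ k : Fin m, (Pm k : Set E2)) :
    Convex ℝ (betaHull m Pm γ β) ∧
    (∀ ℓ : Set E2, IsEdgeLine (betaHull m Pm γ β) ℓ →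
      ∃ a ∈ Pall, ∃ b ∈ Pall, a ≠ b ∧ a ∈ ℓ ∧ b ∈ ℓ) ∧
    (∀ p ∈ Pall,
      {ℓ : Set E2 | IsEdgeLine (betaHull m Pm γ β) ℓ ∧ p ∈ ℓ}.encard ≤ 2) ∧
    {ℓ : Set E2 | IsEdgeLine (betaHull m Pm γ β) ℓ}.encard ≤ 2 * Pall.card := by
  have hP : ∀ k, Pm k ⊆ Pall := fun k s hs => by
    rw [← Finset.mem_coe, hPall]
    exact Set.mem_iUnion.2 ⟨k, hs⟩
  have hedge := fun ℓ (h : IsEdgeLine (betaHull m Pm γ β) ℓ) =>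
    h.exists_pair_mem_of_betaHull (fun k s hs => (hγ k s hs).le) hP
  refine ⟨convex_betaHull, hedge, fun p _ => encard_setOf_isEdgeLine_mem_le_two _ p,
    encard_setOf_isEdgeLine_le _ Pall fun ℓ hℓ => ?_⟩
  obtain ⟨a, ha, -, -, -, haℓ, -⟩ := hedge ℓ hℓ
  exact ⟨a, ha, haℓ⟩

/-- The `β`-hull is a convex polygon with at most `2n` edges: every
edge-supporting line passes through two sites, and each site lies on at most two
edge-supporting lines. -/
theorem betaHull_complexity
    (m : ℕ) (Pm : Fin m → Finset E2) (γ : Fin m → E2 → ℝ)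
    (hγ : ∀ k, ∀ s ∈ Pm k, 0 < γ k s) (hsum : ∀ k, ∑ s ∈ Pm k, γ k s ≤ 1)
    (β : ℝ) (hβ : β ∈ Set.Icc (0 : ℝ) 1)
    (Pall : Finset E2) (hPall : (Pall : Set E2) = ⋃ k : Fin m, (Pm k : Set E2)) :
    Convex ℝ (betaHull m Pm γ β) ∧
    (∀ ℓ : Set E2, IsEdgeLine (betaHull m Pm γ β) ℓ →
      ∃ a ∈ Pall, ∃ b ∈ Pall, a ≠ b ∧ a ∈ ℓ ∧ b ∈ ℓ) ∧
    (∀ p ∈ Pall,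
      {ℓ : Set E2 | IsEdgeLine (betaHull m Pm γ β) ℓ ∧ p ∈ ℓ}.encard ≤ 2) ∧
    {ℓ : Set E2 | IsEdgeLine (betaHull m Pm γ β) ℓ}.encard ≤ 2 * Pall.card :=
  betaHull_complexity_general m Pm γ hγ β Pall hPall
end
end
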